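/- Let $(X, d)$ and $(X', d')$ be metric spaces with $X'$ locally path connected, let $D \subseteq X$ be open, let $G$ be an open set whose closure $K = \overline{G}$ is a compact subset of $D$, let $n \geq 1$ be a real number, and let $\delta > 0$, $a > 0$. Suppose $f_m : D \to X'$, $m = 1, 2, \ldots$, is a sequence of homeomorphisms of $D$ onto open subsets of $X'$ such that $d'(f_m(x), f_m(y)) \geq \frac{\delta}{2}\exp\{-a/d^n(x, y)\}$ for all $x, y \in K$ with $x \neq y$ and all $m$, and suppose $f_m$ converges locally uniformly on $D$ to a map $f : D \to X'$. Then $f|_G$ is an open map, i.e., $f(A)$ is open in $X'$ for every open set $A \subseteq G$. -/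

import Mathlib

/-!
Fix `x₀ ∈ A` and a closed ball `K = closedBall x₀ r ⊆ A`. The distance bound gives
`ε > 0` with `ε ≤ d'(f_m x₀, f_m y)` for every `y` on the sphere `K \ ball x₀ r`, uniformly in `m`.
Let `U` be the path component of `F x₀` in the ball of radius `ε / 3` around it, an open set
since `X'` is locally path connected. Once `f_m` is `ε / 3`-close to `F` on `K`, the connected set
`U` meets the open set `f_m (ball x₀ r)` but misses the image of the sphere, which contains the
frontier of `f_m (ball x₀ r)`; hence `U ⊆ f_m (ball x₀ r)`. Every point of `U` is thus a limit of
values of `F` on `K`, so lies in the compact set `F K`, and it cannot be the image of a point of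
the sphere, on which `F` keeps distance `ε` from `F x₀`. So `U ⊆ F (ball x₀ r) ⊆ F A`.
-/

open Set Metric Filter Topology

lemma IsOpen.image_of_isEmbedding_domRestrict {X Y : Type*} [TopologicalSpace X]
    [TopologicalSpace Y] {D S : Set X} {g : X → Y} (hg : IsEmbedding (D.domRestrict g))
    (hgD : IsOpen (g '' D)) (hS : IsOpen S) (hSD : S ⊆ D) : IsOpen (g '' S) := by
  have hopen : IsOpenMap (D.domRestrict g) :=
    hg.isInducing.isOpenMap (by rwa [range_domRestrict])
  have := hopen _ (hS.preimage continuous_subtype_val)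
  rwa [domRestrict_eq, image_comp, Subtype.image_preimage_coe, inter_eq_right.mpr hSD] at this

lemma IsPreconnected.subset_image_of_disjoint_image_diff {X Y : Type*} [TopologicalSpace X]
    [TopologicalSpace Y] [T2Space Y] {K S : Set X} {g : X → Y} {U : Set Y}
    (hK : IsCompact K) (hSK : S ⊆ K) (hg : ContinuousOn g K) (hgS : IsOpen (g '' S))
    (hU : IsPreconnected U) (hUS : (U ∩ g '' S).Nonempty) (hUK : Disjoint U (g '' (K \ S))) :
    U ⊆ g '' S := by
  refine hU.subset_of_closure_inter_subset hgS hUS fun w ⟨hw, hwU⟩ => by_contra fun hwS => ?_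
  obtain ⟨p, hp, rfl⟩ : w ∈ g '' K :=
    closure_minimal (image_mono hSK) (hK.image_of_continuousOn hg).isClosed hw
  exact hUK.notMem_of_mem_left hwU ⟨p, ⟨hp, fun hpS => hwS (mem_image_of_mem g hpS)⟩, rfl⟩

lemma TendstoUniformlyOn.mem_closure_image {ι X Y : Type*} [PseudoMetricSpace Y]
    {l : Filter ι} {f : ι → X → Y} {F : X → Y} {K : Set X} {y : Y}
    (hconv : TendstoUniformlyOn f F l K) (hy : ∃ᶠ i in l, y ∈ f i '' K) :
    y ∈ closure (F '' K) := by
  refine Metric.mem_closure_iff.mpr fun η hη => ?_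
  obtain ⟨i, ⟨x, hx, rfl⟩, hi⟩ :=
    (hy.and_eventually (tendstoUniformlyOn_iff.mp hconv η hη)).exists
  exact ⟨F x, mem_image_of_mem F hx, by rw [dist_comm]; exact hi x hx⟩

theorem image_mem_nhds_of_tendstoUniformlyOn {ι X Y : Type*} [TopologicalSpace X]
    [MetricSpace Y] [LocallyPathConnectedSpace Y] {l : Filter ι} [l.NeBot]
    {f : ι → X → Y} {F : X → Y} {K S : Set X} {x₀ : X} {ε : ℝ}
    (hK : IsCompact K) (hSK : S ⊆ K) (hx₀ : x₀ ∈ S)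
    (hf : ∀ i, ContinuousOn (f i) K) (hfS : ∀ i, IsOpen (f i '' S))
    (hconv : TendstoUniformlyOn f F l K) (hε : 0 < ε)
    (hsep : ∀ i, ∀ y ∈ K \ S, ε ≤ dist (f i x₀) (f i y)) :
    F '' S ∈ 𝓝 (F x₀) := by
  have hε3 : 0 < ε / 3 := by positivity
  set U := pathComponentIn (ball (F x₀) (ε / 3)) (F x₀)
  have hU : IsOpen U := isOpen_ball.pathComponentIn _
  have hFx₀ : F x₀ ∈ U := mem_pathComponentIn_self (mem_ball_self hε3)
  have hUball : U ⊆ ball (F x₀) (ε / 3) := pathComponentIn_subset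
  have hlim₀ := hconv.tendsto_at (hSK hx₀)
  have hUsub : ∀ᶠ i in l, U ⊆ f i '' S := by
    filter_upwards [tendstoUniformlyOn_iff.mp hconv _ hε3, hlim₀.eventually_mem (hU.mem_nhds hFx₀)]
      with i hclose hi₀
    refine (isPathConnected_pathComponentIn (mem_ball_self hε3)).isConnected.isPreconnected
      |>.subset_image_of_disjoint_image_diff hK hSK (hf i) (hfS i)
        ⟨f i x₀, hi₀, mem_image_of_mem _ hx₀⟩ ?_
    rw [disjoint_right]
    rintro _ ⟨y, hy, rfl⟩ hyU
    have h₀ := hclose x₀ (hSK hx₀)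
    have hy' := mem_ball'.mp (hUball hyU)
    linarith [hsep i y hy, dist_triangle (f i x₀) (F x₀) (f i y), dist_comm (f i x₀) (F x₀)]
  have hFsep : ∀ y ∈ K \ S, ε ≤ dist (F x₀) (F y) := fun y hy =>
    ge_of_tendsto' (hlim₀.dist (hconv.tendsto_at hy.1)) fun i => hsep i y hy
  refine mem_of_superset (hU.mem_nhds hFx₀) fun y hy => ?_
  obtain ⟨z, hz, rfl⟩ : y ∈ F '' K := by
    have hFK := hK.image_of_continuousOn (hconv.continuousOn (.of_forall hf))
    rw [← hFK.isClosed.closure_eq]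
    exact hconv.mem_closure_image (hUsub.mono fun i hi => image_mono hSK (hi hy)).frequently
  refine mem_image_of_mem F (by_contra fun hzS => ?_)
  linarith [hFsep z ⟨hz, hzS⟩, mem_ball'.mp (hUball hy)]

theorem limit_open_map_metric_general {X X' : Type*} [MetricSpace X] [MetricSpace X']
    [LocallyPathConnectedSpace X']
    (D G : Set X)
    (hKcompact : IsCompact (closure G)) (hKD : closure G ⊆ D)
    (n : ℝ) (δ a : ℝ) (hδ : 0 < δ)
    (f : ℕ → X → X')
    (hhomeo : ∀ m : ℕ, Topology.IsEmbedding (fun x : D => f m x) ∧ IsOpen (f m '' D))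
    (hlow : ∀ m : ℕ, ∀ x ∈ closure G, ∀ y ∈ closure G, x ≠ y →
      δ / 2 * Real.exp (-a / dist x y ^ n) ≤ dist (f m x) (f m y))
    (F : X → X')
    (hconv : TendstoLocallyUniformlyOn (fun m => f m) F Filter.atTop D) :
    ∀ A : Set X, A ⊆ G → IsOpen A → IsOpen (F '' A) := by
  intro A hAG hA
  refine isOpen_iff_mem_nhds.mpr ?_
  rintro _ ⟨x₀, hx₀, rfl⟩
  obtain ⟨r, hr, hrA⟩ := nhds_basis_closedBall.mem_iff.mp (hA.mem_nhds hx₀)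
  have hBK : closedBall x₀ r ⊆ closure G := hrA.trans (hAG.trans subset_closure)
  have hBD : closedBall x₀ r ⊆ D := hBK.trans hKD
  have hB : IsCompact (closedBall x₀ r) :=
    hKcompact.of_isClosed_subset isClosed_closedBall hBK
  have hsep : ∀ m, ∀ y ∈ closedBall x₀ r \ ball x₀ r,
      δ / 2 * Real.exp (-a / r ^ n) ≤ dist (f m x₀) (f m y) := by
    intro m y hy
    rw [closedBall_sdiff_ball] at hy
    have hlow' := hlow m x₀ (hBK (mem_closedBall_self hr.le)) y
      (hBK (sphere_subset_closedBall hy)) (ne_of_mem_sphere hy hr.ne').symm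
    rwa [mem_sphere'.mp hy] at hlow'
  refine mem_of_superset ?_ (image_mono (ball_subset_closedBall.trans hrA))
  exact image_mem_nhds_of_tendstoUniformlyOn hB ball_subset_closedBall (mem_ball_self hr)
    (fun m => (continuousOn_iff_continuous_domRestrict.mpr (hhomeo m).1.continuous).mono hBD)
    (fun m => (hhomeo m).2.image_of_isEmbedding_domRestrict (hhomeo m).1 isOpen_ball
      (ball_subset_closedBall.trans hBD))
    ((tendstoLocallyUniformlyOn_iff_tendstoUniformlyOn_of_compact hB).mp (hconv.mono hBD))
    (by positivity) hsep

/-- In metric spaces with `X'` locally path connected, the locally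
uniform limit of homeomorphisms of `D` onto open subsets of `X'` satisfying the
lower distance bound on `K = closure G` is an open map on `G`. -/
theorem limit_open_map_metric {X X' : Type*} [MetricSpace X] [MetricSpace X']
    [LocallyPathConnectedSpace X']
    (D G : Set X) (hDopen : IsOpen D) (hGopen : IsOpen G)
    (hKcompact : IsCompact (closure G)) (hKD : closure G ⊆ D)
    (n : ℝ) (hn : 1 ≤ n) (δ a : ℝ) (hδ : 0 < δ) (ha : 0 < a)
    (f : ℕ → X → X')
    (hhomeo : ∀ m : ℕ, Topology.IsEmbedding (fun x : D => f m x) ∧ IsOpen (f m '' D))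
    (hlow : ∀ m : ℕ, ∀ x ∈ closure G, ∀ y ∈ closure G, x ≠ y →
      δ / 2 * Real.exp (-a / dist x y ^ n) ≤ dist (f m x) (f m y))
    (F : X → X')
    (hconv : TendstoLocallyUniformlyOn (fun m => f m) F Filter.atTop D) :
    ∀ A : Set X, A ⊆ G → IsOpen A → IsOpen (F '' A) :=
  limit_open_map_metric_general D G hKcompact hKD n δ a hδ f hhomeo hlow F hconv
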